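/- arXiv:2011.03163 — 2 statements merged into one kernel-verified Lean document; each statement's English description precedes it below -/
import Mathlib

section
/- Consider minimizing f(c,d) = λ·(d − c) + C·(c·η_c + d/η_d) over c, d ≥ 0 with c ≤ c_rat, d ≤ d_rat, where C > 0, 0 < η_c ≤ 1, η_d ∈ (0,1], and λ ∈ ℝ. If λ satisfies −C·η_c < λ < C/η_d, then every optimal solution satisfies c·d = 0. -/
/-!
Lowering the charging and the discharging power by the same amount `t` leaves the net energy
`d - c` traded at price `λ`, and hence the revenue term, unchanged, but lowers the degradation
cost by `C t (η_c + 1 / η_d) > 0`. If `c` and `d` were both positive, `t = min c d` would give a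
feasible point strictly cheaper than an optimum.
-/

noncomputable def essCost (lam C ηc ηd c d : ℝ) : ℝ := lam * (d - c) + C * (c * ηc + d / ηd)

lemma essCost_sub_sub (lam C ηc ηd c d t : ℝ) :
    essCost lam C ηc ηd (c - t) (d - t) = essCost lam C ηc ηd c d - C * t * (ηc + ηd⁻¹) := by
  unfold essCost
  ring

lemma essCost_sub_sub_lt {lam C ηc ηd c d t : ℝ} (hC : 0 < C) (hηc : 0 < ηc) (hηd : 0 < ηd)
    (ht : 0 < t) : essCost lam C ηc ηd (c - t) (d - t) < essCost lam C ηc ηd c d := by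
  rw [essCost_sub_sub]
  have : 0 < C * t * (ηc + ηd⁻¹) := by positivity
  linarith

theorem stmt_11_general (lam C ηc ηd crat drat : ℝ) (hC : C > 0)
    (hηc : 0 < ηc ∧ ηc ≤ 1) (hηd : 0 < ηd ∧ ηd ≤ 1)
    (c d : ℝ) (hc : 0 ≤ c) (hd : 0 ≤ d) (hcr : c ≤ crat) (hdr : d ≤ drat)
    (hopt : ∀ c' d' : ℝ, 0 ≤ c' → 0 ≤ d' → c' ≤ crat → d' ≤ drat →
      lam * (d - c) + C * (c * ηc + d / ηd) ≤ lam * (d' - c') + C * (c' * ηc + d' / ηd)) :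
    c * d = 0 := by
  by_contra hcd
  obtain ⟨hc0, hd0⟩ := mul_ne_zero_iff.mp hcd
  set t := min c d
  have ht : 0 < t := lt_min (hc.lt_of_ne' hc0) (hd.lt_of_ne' hd0)
  have hle : essCost lam C ηc ηd c d ≤ essCost lam C ηc ηd (c - t) (d - t) :=
    hopt (c - t) (d - t) (sub_nonneg.mpr (min_le_left c d)) (sub_nonneg.mpr (min_le_right c d))
      (by linarith) (by linarith)
  exact (essCost_sub_sub_lt hC hηc.1 hηd.1 ht).not_ge hle

theorem stmt_11 (lam C ηc ηd crat drat : ℝ) (hC : C > 0)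
    (hηc : 0 < ηc ∧ ηc ≤ 1) (hηd : 0 < ηd ∧ ηd ≤ 1)
    (hlam1 : -C * ηc < lam) (hlam2 : lam < C / ηd)
    (c d : ℝ) (hc : 0 ≤ c) (hd : 0 ≤ d) (hcr : c ≤ crat) (hdr : d ≤ drat)
    (hopt : ∀ c' d' : ℝ, 0 ≤ c' → 0 ≤ d' → c' ≤ crat → d' ≤ drat →
      lam * (d - c) + C * (c * ηc + d / ηd) ≤ lam * (d' - c') + C * (c' * ηc + d' / ηd)) :
    c * d = 0 :=
  stmt_11_general lam C ηc ηd crat drat hC hηc hηd c d hc hd hcr hdr hopt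
end

section
/- Consider the OLTC voltage relation v_j = ∑_{x=0}^{2Ō} (o_0 + (x−Ō)·Δo)²·w_x where w_x satisfies U̲²·δ_x ≤ w_x ≤ Ū²·δ_x, U̲²·(1−δ_x) ≤ v_i − w_x ≤ Ū²·(1−δ_x), δ_x ∈ {0,1}, ∑_x δ_x = 1, and U̲² ≤ v_i ≤ Ū². Then this system is satisfied if and only if there exists an integer O with −Ō ≤ O ≤ Ō such that v_j = (o_0 + O·Δo)²·v_i. -/
theorem stmt_19 (Ob : ℕ) (o0 Δo vi vj Ul Uu : ℝ)
    (hvi : Ul ≤ vi ∧ vi ≤ Uu) :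
    (∃ w δ : Fin (2 * Ob + 1) → ℝ,
      (∀ x, δ x = 0 ∨ δ x = 1) ∧ (∑ x : Fin (2 * Ob + 1), δ x = 1) ∧
      (∀ x, Ul * δ x ≤ w x ∧ w x ≤ Uu * δ x ∧
        Ul * (1 - δ x) ≤ vi - w x ∧ vi - w x ≤ Uu * (1 - δ x)) ∧
      vj = ∑ x : Fin (2 * Ob + 1), (o0 + ((x.1 : ℝ) - (Ob : ℝ)) * Δo) ^ 2 * w x) ↔
    (∃ O : ℤ, -(Ob : ℤ) ≤ O ∧ O ≤ (Ob : ℤ) ∧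
      vj = (o0 + (O : ℝ) * Δo) ^ 2 * vi) := by
  obtain ⟨hl, hu⟩ := hvi
  constructor
  · rintro ⟨w, δ, hδ01, hδsum, hw, hvj⟩
    -- find the index where δ = 1
    have hex : ∃ x0, δ x0 = 1 := by
      by_contra h
      push_neg at h
      have : ∀ x ∈ Finset.univ, δ x = 0 := by
        intro x _
        rcases hδ01 x with h0 | h1
        · exact h0
        · exact absurd h1 (h x)
      rw [Finset.sum_eq_zero this] at hδsum
      norm_num at hδsum
    obtain ⟨x0, hx0⟩ := hex
    have hzero : ∀ y, y ≠ x0 → δ y = 0 := by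
      intro y hy
      have hnn : ∀ x ∈ Finset.univ.erase x0, (0:ℝ) ≤ δ x := by
        intro x _
        rcases hδ01 x with h | h <;> simp [h]
      have hsum0 : ∑ x ∈ Finset.univ.erase x0, δ x = 0 := by
        have := Finset.add_sum_erase Finset.univ δ (Finset.mem_univ x0)
        rw [hδsum, hx0] at this
        linarith
      have := (Finset.sum_eq_zero_iff_of_nonneg hnn).mp hsum0 y
        (Finset.mem_erase.mpr ⟨hy, Finset.mem_univ y⟩)
      exact this
    -- w y = 0 for y ≠ x0, w x0 = vi
    have hw0 : ∀ y, y ≠ x0 → w y = 0 := by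
      intro y hy
      obtain ⟨h1, h2, _, _⟩ := hw y
      rw [hzero y hy] at h1 h2
      simp at h1 h2
      linarith
    have hwx0 : w x0 = vi := by
      obtain ⟨_, _, h3, h4⟩ := hw x0
      rw [hx0] at h3 h4
      simp at h3 h4
      linarith
    refine ⟨(x0.1 : ℤ) - Ob, by omega, by omega, ?_⟩
    have : vj = (o0 + ((x0.1 : ℝ) - (Ob : ℝ)) * Δo) ^ 2 * vi := by
      rw [hvj, Finset.sum_eq_single x0]
      · rw [hwx0]
      · intro y _ hy; rw [hw0 y hy]; ring
      · intro h; exact absurd (Finset.mem_univ x0) h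
    rw [this]; push_cast; ring
  · rintro ⟨O, hO1, hO2, hvj⟩
    have hlt : (O + Ob).toNat < 2 * Ob + 1 := by omega
    set x0 : Fin (2 * Ob + 1) := ⟨(O + Ob).toNat, hlt⟩ with hx0def
    refine ⟨fun x => if x = x0 then vi else 0, fun x => if x = x0 then 1 else 0,
      ?_, ?_, ?_, ?_⟩
    · intro x; by_cases h : x = x0 <;> simp [h]
    · simp
    · intro x; by_cases h : x = x0 <;> simp [h] <;> constructor <;> linarith
    · rw [Finset.sum_eq_single x0]
      · have hcast : ((x0.1 : ℝ) - (Ob : ℝ)) = (O : ℝ) := by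
          have : (x0.1 : ℤ) = O + Ob := by simp [hx0def]; omega
          have : ((x0.1 : ℤ) : ℝ) = ((O + Ob : ℤ) : ℝ) := by rw [this]
          push_cast at this
          linarith
        simp [hcast, hvj]
      · intro y _ hy; simp [hy]
      · intro h; exact absurd (Finset.mem_univ x0) h
end
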